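/- Let K be a field, l ≤ n, and A an l×n matrix over K. Let I, K₀ ⊆ {1,…,n} be two l-element subsets such that the l×l submatrices A_I and A_{K₀} (columns indexed by I, resp. K₀, in increasing order) are both invertible. Then the matrix B = A_{K₀}⁻¹·A_I has the property that for each index j with the j-th element of I lying in I ∩ K₀, the j-th column of B is a standard basis vector; consequently det(B) equals, up to sign, the determinant of the submatrix of B with rows indexed by the positions (within K₀) of K₀∖I and columns indexed by the positions (within I) of I∖K₀. -/

import Mathlib

/-!
A column of `A_I` whose index lies in `K₀` is also a column of `A_{K₀}`, so `A_{K₀}⁻¹` sends it to a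
standard basis vector. Permuting the columns of `B` so that each shared column moves to its position
in `K₀`, and the remaining ones are matched by `e`, makes `B` block triangular with an identity
block; its determinant is then the complementary minor, and the permutation costs only its sign.
-/

namespace Matrix

variable {ι κ γ R : Type*} [CommRing R] [Fintype ι] [DecidableEq ι]

theorem inv_submatrix_mul_submatrix_apply [DecidableEq γ] (A : Matrix ι γ R) {u : ι → γ}
    (hu : u.Injective) (hA : IsUnit (A.submatrix id u).det) {v : κ → γ} {j : κ}
    (hj : v j ∈ Set.range u) (i : ι) :
    ((A.submatrix id u)⁻¹ * A.submatrix id v) i j = if u i = v j then 1 else 0 := by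
  obtain ⟨m, hm⟩ := hj
  have hcol : ((A.submatrix id u)⁻¹ * A.submatrix id v) i j
      = ((A.submatrix id u)⁻¹ * A.submatrix id u) i m := by
    simp only [mul_apply, submatrix_apply, id_eq, hm]
  rw [hcol, nonsing_inv_mul _ hA, one_apply, ← hm]
  simp only [hu.eq_iff]

theorem det_eq_det_toSquareBlockProp_of_col_eq_one (C : Matrix ι ι R) (p : ι → Prop)
    [DecidablePred p] (hC : ∀ i j, p j → C i j = (1 : Matrix ι ι R) i j) :
    C.det = (C.toSquareBlockProp fun i => ¬p i).det := by
  have hblock : C.toSquareBlockProp p = 1 := by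
    ext i j
    simp [toSquareBlockProp_def, hC _ _ j.2, one_apply, Subtype.ext_iff]
  rw [C.twoBlockTriangular_det p fun i hi j hj => ?_, hblock, det_one, one_mul]
  rw [hC i j hj, one_apply_ne]
  rintro rfl
  exact hi hj

theorem det_eq_sign_mul_det_submatrix_of_col_eq_single (B : Matrix ι ι R)
    {p q : ι → Prop} [DecidablePred p] [DecidablePred q]
    (φ : {i // p i} ≃ {j // q j}) (e : {i // ¬p i} ≃ {j // ¬q j})
    (hB : ∀ i (a : {i // p i}), B i (φ a) = if i = a then 1 else 0) :
    ∃ ε : R, (ε = 1 ∨ ε = -1) ∧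
      B.det = ε * (B.submatrix (fun i : {i // ¬p i} => (i : ι)) fun i => (e i : ι)).det := by
  set σ : Equiv.Perm ι := Equiv.subtypeCongr φ e
  have hσ : (B.submatrix id σ).toSquareBlockProp (fun i => ¬p i)
      = B.submatrix (fun i : {i // ¬p i} => (i : ι)) fun i => (e i : ι) := by
    ext i j
    simp [σ, toSquareBlockProp_def, Equiv.subtypeCongr]
  have hdet := (B.submatrix id σ).det_eq_det_toSquareBlockProp_of_col_eq_one p fun i j hj => by
    simp [σ, Equiv.subtypeCongr, Equiv.sumCompl_symm_apply_of_pos hj, hB, one_apply]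
  refine ⟨(Equiv.Perm.sign σ : ℤ), ?_, ?_⟩
  · rcases Int.units_eq_one_or (Equiv.Perm.sign σ) with h | h <;> simp [h]
  · rw [← hσ, ← hdet, det_permute', ← mul_assoc, ← Int.cast_mul, ← Units.val_mul,
      Int.units_mul_self, Units.val_one, Int.cast_one, one_mul]

end Matrix

namespace Finset

variable {α β γ : Type*} {s t : Finset γ}

def interIndexEquiv (f : α ≃ s) (g : β ≃ t) : {a // (f a : γ) ∈ t} ≃ {b // (g b : γ) ∈ s} where
  toFun a := ⟨g.symm ⟨f a, a.2⟩, by simp⟩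
  invFun b := ⟨f.symm ⟨g b, b.2⟩, by simp⟩
  left_inv a := by simp
  right_inv b := by simp

theorem coe_interIndexEquiv (f : α ≃ s) (g : β ≃ t) (a : {a // (f a : γ) ∈ t}) :
    (g (interIndexEquiv f g a) : γ) = f a := by
  simp [interIndexEquiv]

end Finset

theorem stmt_16_general {K : Type*} [Field K] (l n : ℕ)
    (A : Matrix (Fin l) (Fin n) K)
    (I K₀ : Finset (Fin n)) (hI : I.card = l) (hK : K₀.card = l)
    (hAK : IsUnit (A.submatrix id fun j : Fin l => ((K₀.orderIsoOfFin hK j : Fin n))).det) :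
    ∀ B : Matrix (Fin l) (Fin l) K,
      B = (A.submatrix id fun j : Fin l => ((K₀.orderIsoOfFin hK j : Fin n)))⁻¹ *
          A.submatrix id (fun j : Fin l => ((I.orderIsoOfFin hI j : Fin n))) →
    (∀ j : Fin l, ((I.orderIsoOfFin hI j : Fin n)) ∈ K₀ →
      ∀ i : Fin l,
        B i j = if ((K₀.orderIsoOfFin hK i : Fin n)) = ((I.orderIsoOfFin hI j : Fin n))
          then 1 else 0) ∧
    ∀ e : {i : Fin l // ((K₀.orderIsoOfFin hK i : Fin n)) ∉ I} ≃
          {j : Fin l // ((I.orderIsoOfFin hI j : Fin n)) ∉ K₀},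
      ∃ ε : K, (ε = 1 ∨ ε = -1) ∧
        B.det = ε * (B.submatrix
          (fun i : {i : Fin l // ((K₀.orderIsoOfFin hK i : Fin n)) ∉ I} => (i : Fin l))
          (fun i : {i : Fin l // ((K₀.orderIsoOfFin hK i : Fin n)) ∉ I} =>
            ((e i : Fin l)))).det := by
  intro B hB
  have hK_inj : Function.Injective fun i : Fin l => (K₀.orderIsoOfFin hK i : Fin n) :=
    Subtype.val_injective.comp (K₀.orderIsoOfFin hK).injective
  have hcol : ∀ j : Fin l, (I.orderIsoOfFin hI j : Fin n) ∈ K₀ → ∀ i : Fin l,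
      B i j = if (K₀.orderIsoOfFin hK i : Fin n) = I.orderIsoOfFin hI j then 1 else 0 :=
    fun j hj i => hB ▸ A.inv_submatrix_mul_submatrix_apply hK_inj hAK
      ⟨_, congrArg Subtype.val ((K₀.orderIsoOfFin hK).apply_symm_apply ⟨_, hj⟩)⟩ i
  let φ := Finset.interIndexEquiv (K₀.orderIsoOfFin hK).toEquiv (I.orderIsoOfFin hI).toEquiv
  refine ⟨hcol, fun e => B.det_eq_sign_mul_det_submatrix_of_col_eq_single φ e fun i a => ?_⟩
  have hφ : (I.orderIsoOfFin hI (φ a) : Fin n) = K₀.orderIsoOfFin hK a :=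
    Finset.coe_interIndexEquiv (K₀.orderIsoOfFin hK).toEquiv (I.orderIsoOfFin hI).toEquiv a
  rw [hcol _ (φ a).2, hφ]
  exact if_congr hK_inj.eq_iff rfl rfl

/-- Let `A_S` denote the `l×l` submatrix of columns of `A` indexed by an
`l`-subset `S` (in increasing order), and set `B = A_K₀⁻¹ · A_I`.  Every column
of `B` corresponding to a shared index of `I` and `K₀` is a standard basis
vector, and `det B` equals, up to sign, the determinant of the submatrix of `B`
with rows the positions (within `K₀`) of `K₀∖I` and columns the positions
(within `I`) of `I∖K₀`. -/
theorem stmt_16 {K : Type*} [Field K] (l n : ℕ) (hln : l ≤ n)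
    (A : Matrix (Fin l) (Fin n) K)
    (I K₀ : Finset (Fin n)) (hI : I.card = l) (hK : K₀.card = l)
    (hAI : IsUnit (A.submatrix id fun j : Fin l => ((I.orderIsoOfFin hI j : Fin n))).det)
    (hAK : IsUnit (A.submatrix id fun j : Fin l => ((K₀.orderIsoOfFin hK j : Fin n))).det) :
    ∀ B : Matrix (Fin l) (Fin l) K,
      B = (A.submatrix id fun j : Fin l => ((K₀.orderIsoOfFin hK j : Fin n)))⁻¹ *
          A.submatrix id (fun j : Fin l => ((I.orderIsoOfFin hI j : Fin n))) →
    (∀ j : Fin l, ((I.orderIsoOfFin hI j : Fin n)) ∈ K₀ →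
      ∀ i : Fin l,
        B i j = if ((K₀.orderIsoOfFin hK i : Fin n)) = ((I.orderIsoOfFin hI j : Fin n))
          then 1 else 0) ∧
    ∀ e : {i : Fin l // ((K₀.orderIsoOfFin hK i : Fin n)) ∉ I} ≃
          {j : Fin l // ((I.orderIsoOfFin hI j : Fin n)) ∉ K₀},
      ∃ ε : K, (ε = 1 ∨ ε = -1) ∧
        B.det = ε * (B.submatrix
          (fun i : {i : Fin l // ((K₀.orderIsoOfFin hK i : Fin n)) ∉ I} => (i : Fin l))
          (fun i : {i : Fin l // ((K₀.orderIsoOfFin hK i : Fin n)) ∉ I} =>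
            ((e i : Fin l)))).det :=
  stmt_16_general l n A I K₀ hI hK hAK
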